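/- For n ≥ 1, det((C(2i, i-j)·x² + C(2i+2, i+1-j))_{i,j=0}^{n-1}) = L_{2n}(x), where L_m(x) is the m-th Lucas polynomial. -/

import Mathlib

/-!
Write `y = x ^ 2 + 2`. Since `C(2i, i - j)` is the coefficient of `t ^ j` in `(t + 2 + t⁻¹) ^ i`, entry
`(i, j)` of the matrix is the coefficient of `t ^ j` in `(t + 2 + t⁻¹) ^ i * (t + y + t⁻¹)`. A Laurent
polynomial invariant under `t ↦ t⁻¹` is determined by these coefficients for `j ≥ 0`, which are its
coordinates in the basis `1, t + t⁻¹, t ^ 2 + t⁻¹ ^ 2, …`. So the matrix is the unitriangular matrix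
`(C(2i, i - k))` times the matrix of multiplication by `t + y + t⁻¹` in that basis; the latter is
tridiagonal with `y` on the diagonal and `1` beside it, except for the entry `2` at `(1, 0)` coming from
`(t + t⁻¹) * t⁻¹ = 1 + t⁻¹ ^ 2`. Expanding along the last row, its determinants `D n` satisfy
`D (n + 2) = y * D (n + 1) - D n` from `D 1 = y`, `D 2 = y ^ 2 - 2`, which is also the recursion of
`L (2n)` obtained from `L (m + 2) = x * L (m + 1) + L m`. The latter follows from the explicit sums via
`L (m + 2) = F (m + 2) + F m` and `F (m + 2) = x * F (m + 1) + F m` for the Fibonacci polynomials `F`.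
-/

/-- Generalized binomial coefficient `C(a,b)` for integer `a`, with `C(a,b) = 0` for `b < 0`. -/
noncomputable def gchoose (a b : ℤ) : ℤ :=
  if 0 ≤ b then Ring.choose a b.toNat else 0

/-- Fibonacci polynomials `F_m(x) = ∑_{k=0}^{⌊m/2⌋} C(m-k,k) x^{m-2k}`. -/
noncomputable def fibP (m : ℕ) (x : ℝ) : ℝ :=
  ∑ k ∈ Finset.range (m / 2 + 1), (Nat.choose (m - k) k : ℝ) * x ^ (m - 2 * k)

/-- Lucas polynomials `L_m(x) = ∑_{k=0}^{⌊m/2⌋} (m/(m-k)) C(m-k,k) x^{m-2k}`, `L_0 = 2`. -/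
noncomputable def lucasP (m : ℕ) (x : ℝ) : ℝ :=
  if m = 0 then 2
  else ∑ k ∈ Finset.range (m / 2 + 1),
    ((m : ℝ) / ((m - k : ℕ) : ℝ)) * (Nat.choose (m - k) k : ℝ) * x ^ (m - 2 * k)

theorem gchoose_of_neg (a : ℤ) {b : ℤ} (hb : b < 0) : gchoose a b = 0 := if_neg (by omega)

theorem gchoose_zero_right (a : ℤ) : gchoose a 0 = 1 := by simp [gchoose]

theorem gchoose_natCast (n : ℕ) {b : ℤ} (hb : 0 ≤ b) : gchoose n b = n.choose b.toNat := by
  rw [gchoose, if_pos hb, Ring.choose_natCast]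

theorem gchoose_natCast_of_lt (n : ℕ) {b : ℤ} (hb : n < b) : gchoose n b = 0 := by
  rw [gchoose_natCast n (by omega), Nat.choose_eq_zero_of_lt (by omega), Nat.cast_zero]

theorem gchoose_natCast_symm (n : ℕ) (b : ℤ) : gchoose n (n - b) = gchoose n b := by
  rcases lt_or_ge b 0 with hb | hb
  · rw [gchoose_natCast_of_lt n (by omega), gchoose_of_neg n hb]
  rcases lt_or_ge (n : ℤ) b with hnb | hbn
  · rw [gchoose_of_neg n (by omega), gchoose_natCast_of_lt n hnb]
  rw [gchoose_natCast n (by omega), gchoose_natCast n hb, show (n - b).toNat = n - b.toNat by omega,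
    Nat.choose_symm (by omega)]

theorem gchoose_add_one_add_one (a b : ℤ) :
    gchoose (a + 1) (b + 1) = gchoose a b + gchoose a (b + 1) := by
  rcases lt_or_ge b 0 with hb | hb
  · rw [gchoose_of_neg a hb]
    rcases lt_or_ge (b + 1) 0 with hb' | hb'
    · rw [gchoose_of_neg _ hb', gchoose_of_neg _ hb', add_zero]
    · rw [show b + 1 = 0 by omega, gchoose_zero_right, gchoose_zero_right, zero_add]
  simp only [gchoose, if_pos hb, if_pos (by omega : 0 ≤ b + 1), show (b + 1).toNat = b.toNat + 1 by omega,
    Ring.choose_succ_succ]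

theorem gchoose_add_two_add_one (a b : ℤ) :
    gchoose (a + 2) (b + 1) = gchoose a (b - 1) + 2 * gchoose a b + gchoose a (b + 1) := by
  have h := gchoose_add_one_add_one a (b - 1)
  rw [sub_add_cancel] at h
  rw [show a + 2 = a + 1 + 1 by ring, gchoose_add_one_add_one, gchoose_add_one_add_one, h]
  ring

theorem gchoose_two_mul_add_eq_sub (i : ℕ) (j : ℤ) :
    gchoose (2 * i) (i + j) = gchoose (2 * i) (i - j) := by
  have h := gchoose_natCast_symm (2 * i) (i - j)
  push_cast at h
  rw [← h]
  ring_nf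

theorem fibP_eq_sum_range {m N : ℕ} (hN : m / 2 < N) (x : ℝ) :
    fibP m x = ∑ k ∈ Finset.range N, (Nat.choose (m - k) k : ℝ) * x ^ (m - 2 * k) := by
  refine Finset.sum_subset (Finset.range_subset_range.2 hN) fun k _ hk => ?_
  rw [Finset.mem_range, not_lt] at hk
  rw [Nat.choose_eq_zero_of_lt (by omega), Nat.cast_zero, zero_mul]

theorem fibP_add_two (m : ℕ) (x : ℝ) : fibP (m + 2) x = x * fibP (m + 1) x + fibP m x := by
  have hcoeff : ∀ j ∈ Finset.range (m + 2),
      (Nat.choose (m + 2 - (j + 1)) (j + 1) : ℝ) * x ^ (m + 2 - 2 * (j + 1)) =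
        x * ((Nat.choose (m + 1 - (j + 1)) (j + 1) : ℝ) * x ^ (m + 1 - 2 * (j + 1))) +
          (Nat.choose (m - j) j : ℝ) * x ^ (m - 2 * j) := by
    intro j hj
    rw [Finset.mem_range] at hj
    rcases Nat.lt_or_ge m j with hmj | hjm
    · rw [Nat.choose_eq_zero_of_lt (by omega : m + 2 - (j + 1) < j + 1),
        Nat.choose_eq_zero_of_lt (by omega : m + 1 - (j + 1) < j + 1),
        Nat.choose_eq_zero_of_lt (by omega : m - j < j)]
      simp
    have hpascal : (m + 2 - (j + 1)).choose (j + 1) = (m - j).choose j + (m - j).choose (j + 1) := by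
      rw [show m + 2 - (j + 1) = m - j + 1 by omega, Nat.choose_succ_succ]
    rcases Nat.lt_or_ge m (2 * j + 1) with hodd | hle
    · rw [hpascal, Nat.choose_eq_zero_of_lt (by omega : m - j < j + 1),
        Nat.choose_eq_zero_of_lt (by omega : m + 1 - (j + 1) < j + 1),
        show m + 2 - 2 * (j + 1) = m - 2 * j by omega]
      simp
    · rw [hpascal, show m + 1 - (j + 1) = m - j by omega, show m + 2 - 2 * (j + 1) = m - 2 * j by omega,
        show m - 2 * j = m + 1 - 2 * (j + 1) + 1 by omega]
      push_cast
      ring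
  rw [fibP_eq_sum_range (N := m + 3) (by omega), fibP_eq_sum_range (m := m + 1) (N := m + 3) (by omega),
    fibP_eq_sum_range (N := m + 2) (by omega), Finset.sum_range_succ', Finset.sum_range_succ' _ (m + 2),
    Finset.sum_congr rfl hcoeff, Finset.sum_add_distrib, ← Finset.mul_sum]
  simp only [Nat.sub_zero, Nat.choose_zero_right, Nat.cast_one, one_mul, mul_zero]
  ring

theorem lucasP_eq_sum_range {m N : ℕ} (hm : m ≠ 0) (hN : m / 2 < N) (x : ℝ) :
    lucasP m x = ∑ k ∈ Finset.range N,
      ((m : ℝ) / ((m - k : ℕ) : ℝ)) * (Nat.choose (m - k) k : ℝ) * x ^ (m - 2 * k) := by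
  rw [lucasP, if_neg hm]
  refine Finset.sum_subset (Finset.range_subset_range.2 hN) fun k _ hk => ?_
  rw [Finset.mem_range, not_lt] at hk
  rw [Nat.choose_eq_zero_of_lt (by omega), Nat.cast_zero, mul_zero, zero_mul]

theorem lucasP_add_two_eq_fibP_add_fibP (m : ℕ) (x : ℝ) :
    lucasP (m + 2) x = fibP (m + 2) x + fibP m x := by
  have hcoeff : ∀ j ∈ Finset.range (m + 2),
      ((m + 2 : ℕ) : ℝ) / ((m + 2 - (j + 1) : ℕ) : ℝ) * (Nat.choose (m + 2 - (j + 1)) (j + 1) : ℝ) *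
          x ^ (m + 2 - 2 * (j + 1)) =
        (Nat.choose (m + 2 - (j + 1)) (j + 1) : ℝ) * x ^ (m + 2 - 2 * (j + 1)) +
          (Nat.choose (m - j) j : ℝ) * x ^ (m - 2 * j) := by
    intro j hj
    rw [Finset.mem_range] at hj
    rcases Nat.lt_or_ge m j with hmj | hjm
    · rw [Nat.choose_eq_zero_of_lt (by omega : m + 2 - (j + 1) < j + 1),
        Nat.choose_eq_zero_of_lt (by omega : m - j < j)]
      simp
    have habsorb := Nat.add_one_mul_choose_eq (m - j) j
    rw [show m + 2 - (j + 1) = m - j + 1 by omega, show m + 2 - 2 * (j + 1) = m - 2 * j by omega]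
    have hpos : ((m - j + 1 : ℕ) : ℝ) ≠ 0 := by positivity
    rw [div_mul_eq_mul_div, div_mul_eq_mul_div, div_eq_iff hpos]
    have hcast : ((m - j : ℕ) : ℝ) = (m : ℝ) - j := by rw [Nat.cast_sub hjm]
    have habsorbR := congrArg (Nat.cast : ℕ → ℝ) habsorb
    push_cast [hcast] at habsorbR ⊢
    linear_combination (-(x ^ (m - 2 * j))) * habsorbR
  rw [lucasP_eq_sum_range (N := m + 3) (by omega) (by omega), fibP_eq_sum_range (N := m + 3) (by omega),
    fibP_eq_sum_range (N := m + 2) (by omega), Finset.sum_range_succ', Finset.sum_range_succ' _ (m + 2),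
    Finset.sum_congr rfl hcoeff, Finset.sum_add_distrib]
  simp only [Nat.sub_zero, Nat.choose_zero_right, Nat.cast_one, mul_one, one_mul, mul_zero]
  rw [div_self (by positivity)]
  ring

theorem fibP_zero (x : ℝ) : fibP 0 x = 1 := by simp [fibP]

theorem fibP_one (x : ℝ) : fibP 1 x = x := by simp [fibP]

theorem lucasP_zero (x : ℝ) : lucasP 0 x = 2 := by simp [lucasP]

theorem lucasP_one (x : ℝ) : lucasP 1 x = x := by simp [lucasP]

theorem lucasP_add_two (m : ℕ) (x : ℝ) : lucasP (m + 2) x = x * lucasP (m + 1) x + lucasP m x := by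
  rcases m with _ | _ | m
  · rw [lucasP_add_two_eq_fibP_add_fibP, fibP_add_two, lucasP_one, lucasP_zero, fibP_one, fibP_zero]
    ring
  · rw [lucasP_add_two_eq_fibP_add_fibP, lucasP_add_two_eq_fibP_add_fibP, fibP_add_two, lucasP_one,
      fibP_one, fibP_zero]
    ring
  · rw [lucasP_add_two_eq_fibP_add_fibP, lucasP_add_two_eq_fibP_add_fibP,
      lucasP_add_two_eq_fibP_add_fibP, fibP_add_two (m + 2), fibP_add_two m]
    ring

theorem lucasP_add_four (m : ℕ) (x : ℝ) :
    lucasP (m + 4) x = (x ^ 2 + 2) * lucasP (m + 2) x - lucasP m x := by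
  linear_combination lucasP_add_two (m + 2) x + x * lucasP_add_two (m + 1) x - lucasP_add_two m x

theorem Matrix.det_succ_succ_of_last_row_col_eq_zero {R : Type*} [CommRing R] {n : ℕ}
    (A : Matrix (Fin (n + 2)) (Fin (n + 2)) R)
    (hrow : ∀ j : Fin n, A (Fin.last _) j.castSucc.castSucc = 0)
    (hcol : ∀ i : Fin n, A i.castSucc.castSucc (Fin.last _) = 0) :
    A.det = A (Fin.last _) (Fin.last _) * (A.submatrix Fin.castSucc Fin.castSucc).det -
      A (Fin.last _) (Fin.last n).castSucc * A (Fin.last n).castSucc (Fin.last _) *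
        ((A.submatrix Fin.castSucc Fin.castSucc).submatrix Fin.castSucc Fin.castSucc).det := by
  have hsuccAbove : (Fin.last n).castSucc.succAbove ∘ Fin.castSucc = Fin.castSucc ∘ Fin.castSucc :=
    funext fun j => Fin.succAbove_castSucc_of_lt _ _ (Fin.castSucc_lt_last j)
  have hminor : (A.submatrix Fin.castSucc (Fin.last n).castSucc.succAbove).det =
      A (Fin.last n).castSucc (Fin.last _) *
        ((A.submatrix Fin.castSucc Fin.castSucc).submatrix Fin.castSucc Fin.castSucc).det := by
    rw [Matrix.det_succ_column _ (Fin.last n), Fin.sum_univ_castSucc]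
    simp [hcol, hsuccAbove]
  rw [Matrix.det_succ_row A (Fin.last (n + 1)), Fin.sum_univ_castSucc, Fin.sum_univ_castSucc]
  simp only [Nat.succ_eq_add_one, Fin.val_last, Fin.val_castSucc, hrow, mul_zero, Fin.succAbove_last,
    zero_mul, Finset.sum_const_zero, odd_add_one_self, Odd.neg_one_pow, neg_mul, one_mul, hminor,
    submatrix_submatrix, zero_add, Even.add_self, Even.neg_pow, one_pow]
  ring

noncomputable def centralBinomialMatrix (R : Type*) [Ring R] (n : ℕ) : Matrix (Fin n) (Fin n) R :=
  Matrix.of fun i k : Fin n => (gchoose (2 * (i : ℤ)) ((i : ℤ) - (k : ℤ)) : R)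

section

variable {R : Type*}

theorem det_centralBinomialMatrix [CommRing R] (n : ℕ) : (centralBinomialMatrix R n).det = 1 := by
  rw [Matrix.det_of_isLowerTriangular]
  · simp [centralBinomialMatrix, gchoose_zero_right]
  · intro i k hik
    have hik' : (i : ℕ) < k := hik
    simp [centralBinomialMatrix, gchoose_of_neg _ (by omega : (i : ℤ) - k < 0)]

theorem sum_gchoose_mul_ite_eq [Ring R] {n i : ℕ} (hi : i < n) (m : ℤ) (c : R) :
    ∑ k : Fin n, (gchoose (2 * (i : ℤ)) (i - k) : R) * (if (k : ℤ) = m then c else 0) =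
      if 0 ≤ m then (gchoose (2 * (i : ℤ)) (i - m) : R) * c else 0 := by
  simp only [mul_ite, mul_zero]
  rcases lt_or_ge m 0 with hm | hm
  · rw [if_neg hm.not_ge]
    exact Finset.sum_eq_zero fun k _ => if_neg (by omega)
  obtain ⟨m, rfl⟩ := Int.eq_ofNat_of_zero_le hm
  rw [if_pos hm]
  simp only [Nat.cast_inj]
  rw [Fin.sum_univ_eq_sum_range (fun k => if k = m then (gchoose (2 * (i : ℤ)) (i - k) : R) * c else 0),
    Finset.sum_ite_eq']
  split_ifs with hmn
  · rfl
  · rw [Finset.mem_range] at hmn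
    rw [gchoose_of_neg _ (by omega), Int.cast_zero, zero_mul]

noncomputable def foldedTridiag [Ring R] (y : R) (n : ℕ) : Matrix (Fin n) (Fin n) R :=
  Matrix.of fun k j : Fin n =>
    (if (k : ℤ) = j then y else 0) + (if (k : ℤ) = j - 1 then 1 else 0) +
      (if (k : ℤ) = j + 1 then 1 else 0) + (if (k : ℤ) = 1 then (if (j : ℕ) = 0 then 1 else 0) else 0)

theorem centralBinomialMatrix_mul_foldedTridiag [Ring R] (z : R) (n : ℕ) :
    centralBinomialMatrix R n * foldedTridiag (z + 2) n = Matrix.of fun i j : Fin n =>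
      (gchoose (2 * (i : ℤ)) ((i : ℤ) - (j : ℤ)) : R) * z +
        (gchoose (2 * (i : ℤ) + 2) ((i : ℤ) + 1 - (j : ℤ)) : R) := by
  ext i j
  simp only [Matrix.mul_apply, centralBinomialMatrix, foldedTridiag, Matrix.of_apply, mul_add,
    Finset.sum_add_distrib, sum_gchoose_mul_ite_eq i.isLt]
  rw [show (i : ℤ) + 1 - j = (i - j) + 1 by ring, gchoose_add_two_add_one]
  have hj : (0 : ℤ) ≤ j := by positivity
  rw [if_pos hj, if_pos (by omega : (0 : ℤ) ≤ j + 1), if_pos zero_le_one,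
    show (i : ℤ) - j - 1 = i - (j + 1) by ring, show (i : ℤ) - j + 1 = i - (j - 1) by ring]
  push_cast
  rcases Nat.eq_zero_or_pos j with hj0 | hj0
  · simp only [hj0, Nat.cast_zero, sub_zero, zero_sub, sub_neg_eq_add, gchoose_two_mul_add_eq_sub,
      Int.reduceNeg, Int.neg_nonneg, Int.reduceLE, ↓reduceIte, add_zero, zero_add, mul_one]
    noncomm_ring
  · rw [if_pos (by omega), if_neg (by omega)]
    noncomm_ring

theorem foldedTridiag_submatrix_castSucc [Ring R] (y : R) (n : ℕ) :
    (foldedTridiag y (n + 1)).submatrix Fin.castSucc Fin.castSucc = foldedTridiag y n := by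
  ext k j
  simp only [foldedTridiag, Matrix.submatrix_apply, Matrix.of_apply, Fin.val_castSucc]

theorem foldedTridiag_apply_self [Ring R] (y : R) {n : ℕ} (k : Fin n) : foldedTridiag y n k k = y := by
  simp only [foldedTridiag, Matrix.of_apply]
  split_ifs <;> first | (exfalso; omega) | simp

theorem det_foldedTridiag_add_two [CommRing R] (y : R) (n : ℕ) :
    (foldedTridiag y (n + 2)).det =
      y * (foldedTridiag y (n + 1)).det - (if n = 0 then 2 else 1) * (foldedTridiag y n).det := by
  have hsub : foldedTridiag y (n + 2) (Fin.last _) (Fin.last n).castSucc = if n = 0 then 2 else 1 := by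
    simp only [foldedTridiag, Matrix.of_apply, Fin.val_castSucc, Fin.val_last]
    split_ifs <;> first | (exfalso; omega) | norm_num
  have hsuper : foldedTridiag y (n + 2) (Fin.last n).castSucc (Fin.last _) = 1 := by
    simp only [foldedTridiag, Matrix.of_apply, Fin.val_castSucc, Fin.val_last]
    split_ifs <;> first | (exfalso; omega) | norm_num
  rw [Matrix.det_succ_succ_of_last_row_col_eq_zero, foldedTridiag_submatrix_castSucc,
    foldedTridiag_submatrix_castSucc, foldedTridiag_apply_self, hsub, hsuper, mul_one]
  all_goals
    intro k
    have := k.isLt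
    simp only [foldedTridiag, Matrix.of_apply, Fin.val_castSucc, Fin.val_last]
    split_ifs <;> first | (exfalso; omega) | norm_num

theorem det_foldedTridiag_eq_lucasP (x : ℝ) (n : ℕ) :
    (foldedTridiag (x ^ 2 + 2) (n + 1)).det = lucasP (2 * n + 2) x := by
  induction n using Nat.twoStepInduction with
  | zero =>
    rw [Matrix.det_fin_one, foldedTridiag_apply_self, lucasP_add_two, lucasP_one, lucasP_zero]
    ring
  | one =>
    rw [det_foldedTridiag_add_two, Matrix.det_fin_one, foldedTridiag_apply_self, Matrix.det_isEmpty,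
      if_pos rfl, lucasP_add_four 0, lucasP_add_two, lucasP_one, lucasP_zero]
    ring
  | more n ih₁ ih₂ =>
    rw [det_foldedTridiag_add_two, if_neg (by omega), ih₂, ih₁, one_mul,
      show 2 * (n + 2) + 2 = 2 * n + 2 + 4 by ring, lucasP_add_four]
    ring_nf

end

theorem det_eq_lucas_even (n : ℕ) (hn : 1 ≤ n) (x : ℝ) :
    Matrix.det (Matrix.of fun i j : Fin n =>
        (gchoose (2 * (i : ℤ)) ((i : ℤ) - (j : ℤ)) : ℝ) * x ^ 2 +
        (gchoose (2 * (i : ℤ) + 2) ((i : ℤ) + 1 - (j : ℤ)) : ℝ)) = lucasP (2 * n) x := by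
  obtain ⟨m, rfl⟩ := Nat.exists_eq_add_of_le' hn
  rw [← centralBinomialMatrix_mul_foldedTridiag, Matrix.det_mul, det_centralBinomialMatrix, one_mul,
    det_foldedTridiag_eq_lucasP, mul_add_one]
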